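/- Let G be a finite group and let i : V → X, j : X → Y, k : Y → Z be maps of finite G-sets. Suppose (a : A → X, b : A → B, q : B → Z) is a distributor for (j, k); let P := V ×_X A be the pullback of i and a, with projections h : P → V and c : P → A; and suppose (g : C → P, f : C → D, p : D → B) is a distributor for (c, b). Then (h ∘ g : C → V, f : C → D, q ∘ p : D → Z) is a distributor for (j ∘ i, k). -/

import Mathlib

set_option autoImplicit false

namespace Tamb

variable {G : Type} [Group G]

/-- A function between `G`-sets is equivariant. -/
def IsEquivariant (G : Type) [Group G] {A B : Type} [SMul G A] [SMul G B] (f : A → B) : Prop :=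
  ∀ (g : G) (a : A), f (g • a) = g • f a

section Maps

variable {X Y Z : Type} [MulAction G X] [MulAction G Y] [MulAction G Z]

/-- The identity equivariant map. -/
def gid (G X : Type) [Group G] [MulAction G X] : X →[G] X :=
  ⟨fun x => x, fun _ _ => rfl⟩

@[simp] theorem gid_apply (x : X) : gid G X x = x := rfl

/-- Composition of equivariant maps. -/
def gcomp (j : Y →[G] Z) (i : X →[G] Y) : X →[G] Z :=
  ⟨fun x => j (i x), fun g x => by
    show j (i (g • x)) = g • j (i x)
    rw [MulActionHom.map_smul, MulActionHom.map_smul]⟩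

@[simp] theorem gcomp_apply (j : Y →[G] Z) (i : X →[G] Y) (x : X) : gcomp j i x = j (i x) := rfl

/-- The pullback of two equivariant maps of `G`-sets. -/
def Pb (f : X →[G] Z) (g : Y →[G] Z) : Type := {p : X × Y // f p.1 = g p.2}

namespace Pb

variable (f : X →[G] Z) (g : Y →[G] Z)

instance : SMul G (Pb f g) :=
  ⟨fun a p => ⟨(a • p.1.1, a • p.1.2), by
    rw [MulActionHom.map_smul, MulActionHom.map_smul, p.2]⟩⟩

instance : MulAction G (Pb f g) where
  one_smul p := Subtype.ext (Prod.ext (one_smul _ _) (one_smul _ _))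
  mul_smul a b p := Subtype.ext (Prod.ext (mul_smul _ _ _) (mul_smul _ _ _))

instance [Finite X] [Finite Y] : Finite (Pb f g) := Subtype.finite

/-- First projection of a pullback. -/
def fstHom : Pb f g →[G] X := ⟨fun p => p.1.1, fun _ _ => rfl⟩
/-- Second projection of a pullback. -/
def sndHom : Pb f g →[G] Y := ⟨fun p => p.1.2, fun _ _ => rfl⟩

@[simp] theorem fstHom_apply (p : Pb f g) : fstHom f g p = p.1.1 := rfl
@[simp] theorem sndHom_apply (p : Pb f g) : sndHom f g p = p.1.2 := rfl

end Pb

/-- `Sec i j` is the set `∏_{i,j} X` of sections of `i : X → Y` defined on fibers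
of `j : Y → Z`: an element is a point `z : Z` together with a section of `i`
defined on `j⁻¹(z)`. -/
structure Sec (i : X →[G] Y) (j : Y →[G] Z) where
  pt : Z
  sec : ∀ y : Y, j y = pt → X
  isSec : ∀ (y : Y) (h : j y = pt), i (sec y h) = y

namespace Sec

variable {i : X →[G] Y} {j : Y →[G] Z}

theorem ext' {σ τ : Sec i j} (h1 : σ.pt = τ.pt)
    (h2 : ∀ (y : Y) (h : j y = σ.pt) (h' : j y = τ.pt), σ.sec y h = τ.sec y h') : σ = τ := by
  obtain ⟨p, s, hs⟩ := σ
  obtain ⟨p', s', hs'⟩ := τ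
  dsimp at h1
  subst h1
  have hss : s = s' := by
    funext y hy
    exact h2 y hy hy
  subst hss
  rfl

theorem sec_congr (σ : Sec i j) {y y' : Y} (e : y = y') {h : j y = σ.pt} {h' : j y' = σ.pt} :
    σ.sec y h = σ.sec y' h' := by subst e; rfl

instance : SMul G (Sec i j) :=
  ⟨fun a σ =>
    { pt := a • σ.pt
      sec := fun y h => a • σ.sec (a⁻¹ • y) (by rw [MulActionHom.map_smul, h, inv_smul_smul])
      isSec := fun y h => by
        rw [MulActionHom.map_smul, σ.isSec, smul_inv_smul] }⟩

@[simp] theorem smul_pt (a : G) (σ : Sec i j) : (a • σ).pt = a • σ.pt := rfl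

theorem smul_sec (a : G) (σ : Sec i j) (y : Y) (h : j y = (a • σ).pt)
    (h' : j (a⁻¹ • y) = σ.pt) : (a • σ).sec y h = a • σ.sec (a⁻¹ • y) h' := rfl

instance : MulAction G (Sec i j) where
  one_smul σ := by
    refine ext' (one_smul _ _) (fun y h h' => ?_)
    have h'' : j ((1 : G)⁻¹ • y) = σ.pt := by rw [inv_one, one_smul]; exact h'
    rw [smul_sec 1 σ y h h'', one_smul]
    exact sec_congr σ (by rw [inv_one, one_smul])
  mul_smul a b σ := by
    refine ext' (mul_smul _ _ _) (fun y h h' => ?_)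
    have h1 : j ((a * b)⁻¹ • y) = σ.pt := by
      rw [MulActionHom.map_smul, h]
      exact inv_smul_smul _ _
    have h2 : j (a⁻¹ • y) = (b • σ).pt := by
      rw [MulActionHom.map_smul, h']
      show a⁻¹ • (a • (b • σ).pt) = _
      exact inv_smul_smul _ _
    have h3 : j (b⁻¹ • (a⁻¹ • y)) = σ.pt := by
      rw [MulActionHom.map_smul, h2]
      exact inv_smul_smul _ _
    rw [smul_sec (a * b) σ y h h1, smul_sec a (b • σ) y h' h2, smul_sec b σ (a⁻¹ • y) h2 h3,
      mul_smul]
    exact congrArg (a • ·) (congrArg (b • ·) (sec_congr σ (by rw [mul_inv_rev, mul_smul])))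

instance optionFinite {X : Type} [Finite X] : Finite (Option X) :=
  Finite.of_equiv (X ⊕ PUnit.{1}) (Equiv.optionEquivSumPUnit.{0,0} X).symm

instance [Finite X] [Finite Y] [Finite Z] : Finite (Sec i j) := by
  classical
  have hF : Function.Injective (fun σ : Sec i j =>
      ((σ.pt, fun y => if h : j y = σ.pt then some (σ.sec y h) else none) :
        Z × (Y → Option X))) := by
    intro σ τ he
    have h1 : σ.pt = τ.pt := congrArg Prod.fst he
    refine ext' h1 (fun y hy hy' => ?_)
    have h2 := congrFun (congrArg Prod.snd he) y
    dsimp only at h2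
    rw [dif_pos hy, dif_pos hy'] at h2
    exact Option.some_injective _ h2
  exact Finite.of_injective _ hF

end Sec

/-- The canonical projection `∏_{i,j} X → Z`. -/
def pHom (i : X →[G] Y) (j : Y →[G] Z) : Sec i j →[G] Z :=
  ⟨fun σ => σ.pt, fun _ _ => rfl⟩

@[simp] theorem pHom_apply (i : X →[G] Y) (j : Y →[G] Z) (σ : Sec i j) :
    pHom i j σ = σ.pt := rfl

/-- The canonical pullback `Y ×_Z ∏_{i,j} X`. -/
abbrev ECan (i : X →[G] Y) (j : Y →[G] Z) : Type := Pb j (pHom i j)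

/-- The evaluation map `e : Y ×_Z ∏_{i,j} X → X`. -/
def eval (i : X →[G] Y) (j : Y →[G] Z) : ECan i j → X := fun q => q.1.2.sec q.1.1 q.2

theorem eval_smul (i : X →[G] Y) (j : Y →[G] Z) (a : G) (q : ECan i j) :
    eval i j (a • q) = a • eval i j q := by
  have h1 : j (a • q.1.1) = (a • q.1.2).pt := by
    rw [MulActionHom.map_smul, q.2]; rfl
  have h2 : j (a⁻¹ • (a • q.1.1)) = q.1.2.pt := by rw [inv_smul_smul]; exact q.2
  calc eval i j (a • q) = (a • q.1.2).sec (a • q.1.1) h1 := rfl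
    _ = a • q.1.2.sec (a⁻¹ • (a • q.1.1)) h2 := Sec.smul_sec _ _ _ _ _
    _ = a • q.1.2.sec q.1.1 q.2 := congrArg (a • ·) (Sec.sec_congr _ (inv_smul_smul a q.1.1))

/-- The evaluation map as an equivariant map. -/
def evalHom (i : X →[G] Y) (j : Y →[G] Z) : ECan i j →[G] X :=
  ⟨eval i j, eval_smul i j⟩

/-- The projection `π₂ : Y ×_Z ∏_{i,j} X → ∏_{i,j} X` of the canonical exponential diagram. -/
def pi2Hom (i : X →[G] Y) (j : Y →[G] Z) : ECan i j →[G] Sec i j :=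
  Pb.sndHom j (pHom i j)

end Maps

/-- `(f, g, h)` is a distributor for `(i, j)`: the diagram with bottom row
`X →i Y →j Z`, top row `g : A → B`, left vertical `f : A → X` and right vertical
`h : B → Z` is an exponential diagram, i.e. it is isomorphic (by equivariant
bijections fixing the bottom row) to the canonical diagram built from `∏_{i,j} X`. -/
def IsDistributor {X Y Z A B : Type} [MulAction G X] [MulAction G Y] [MulAction G Z]
    [MulAction G A] [MulAction G B]
    (i : X →[G] Y) (j : Y →[G] Z) (f : A →[G] X) (g : A →[G] B) (h : B →[G] Z) : Prop :=
  ∃ (α : A ≃ ECan i j) (β : B ≃ Sec i j),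
    IsEquivariant G ⇑α ∧ IsEquivariant G ⇑β ∧
    (∀ a, eval i j (α a) = f a) ∧
    (∀ a, β (g a) = (α a).1.2) ∧
    (∀ b, (β b).pt = h b)

end Tamb

/-!
Transporting the second distributor along the isomorphism that exhibits the first one as
exponential, we may assume that `A = Y ×_Z ∏_{j,k} X` and `B = ∏_{j,k} X` carry the canonical
exponential diagram. A section of the pullback `P → A` over the fibre of `b` at `τ ∈ ∏_{j,k} X` is
then a lift of `τ` through `i`, i.e. a section of `j ∘ i` over the fibre `k⁻¹(τ.pt)`. This identifies
`∏_{c,b} P` with `∏_{j∘i,k} V` over `Z`, and the canonical diagram of `(c, b)` with that of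
`(j ∘ i, k)`.
-/

theorem Equiv.comm_symm {α β γ δ : Type} {f : α → γ} {f' : β → δ} {e₁ : α ≃ β} {e₂ : γ ≃ δ}
    (h : ∀ x, f' (e₁ x) = e₂ (f x)) (y : β) : f (e₁.symm y) = e₂.symm (f' y) := by
  rw [Equiv.eq_symm_apply, ← h, Equiv.apply_symm_apply]

namespace Tamb

variable {G : Type} [Group G]

section Equivariant

variable {X Y : Type} [MulAction G X] [MulAction G Y]

theorem IsEquivariant.symm {e : X ≃ Y} (he : IsEquivariant G ⇑e) : IsEquivariant G ⇑e.symm :=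
  fun t y => e.injective (by rw [he, Equiv.apply_symm_apply, Equiv.apply_symm_apply])

def IsEquivariant.toHom {e : X → Y} (he : IsEquivariant G e) : X →[G] Y := ⟨e, he⟩

end Equivariant

section Congr

variable {X Y Z X' Y' Z' : Type} [MulAction G X] [MulAction G Y] [MulAction G Z]
  [MulAction G X'] [MulAction G Y'] [MulAction G Z']
  (eX : X ≃ X') (eY : Y ≃ Y') (eZ : Z ≃ Z')

def Pb.congr {f : X →[G] Z} {g : Y →[G] Z} {f' : X' →[G] Z'} {g' : Y' →[G] Z'}
    (hf : ∀ x, f' (eX x) = eZ (f x)) (hg : ∀ y, g' (eY y) = eZ (g y)) : Pb f g ≃ Pb f' g' :=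
  (eX.prodCongr eY).subtypeEquiv fun p => by
    simp only [Equiv.prodCongr_apply, Prod.map_fst, Prod.map_snd, hf, hg, eZ.apply_eq_iff_eq]

theorem Pb.congr_equivariant {f : X →[G] Z} {g : Y →[G] Z} {f' : X' →[G] Z'} {g' : Y' →[G] Z'}
    (hf : ∀ x, f' (eX x) = eZ (f x)) (hg : ∀ y, g' (eY y) = eZ (g y))
    (hX : IsEquivariant G ⇑eX) (hY : IsEquivariant G ⇑eY) :
    IsEquivariant G ⇑(Pb.congr eX eY eZ hf hg) :=
  fun t p => Subtype.ext (Prod.ext (hX t p.1.1) (hY t p.1.2))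

namespace Sec

variable {i : X →[G] Y} {j : Y →[G] Z} {i' : X' →[G] Y'} {j' : Y' →[G] Z'}
  {eX eY eZ} (hi : ∀ x, i' (eX x) = eY (i x)) (hj : ∀ y, j' (eY y) = eZ (j y))

def map (σ : Sec i j) : Sec i' j' where
  pt := eZ σ.pt
  sec y h := eX (σ.sec (eY.symm y) (eZ.injective (by rw [← hj, Equiv.apply_symm_apply, h])))
  isSec y h := by rw [hi, σ.isSec, Equiv.apply_symm_apply]

theorem map_symm_map (σ : Sec i j) :
    map (Equiv.comm_symm hi) (Equiv.comm_symm hj) (map hi hj σ) = σ :=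
  ext' (eZ.symm_apply_apply σ.pt) fun y _ _ => by
    simp only [map, Equiv.symm_apply_apply]
    exact sec_congr σ (by simp only [Equiv.symm_symm, Equiv.symm_apply_apply])

theorem map_smul (hX : IsEquivariant G ⇑eX) (hY : IsEquivariant G ⇑eY)
    (hZ : IsEquivariant G ⇑eZ) (t : G) (σ : Sec i j) : map hi hj (t • σ) = t • map hi hj σ :=
  ext' (hZ t σ.pt) fun y _ _ =>
    (hX t _).trans (congrArg (t • eX ·) (sec_congr σ (hY.symm t⁻¹ y).symm))

def congr : Sec i j ≃ Sec i' j' where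
  toFun := map hi hj
  invFun := map (Equiv.comm_symm hi) (Equiv.comm_symm hj)
  left_inv := map_symm_map hi hj
  right_inv := map_symm_map (Equiv.comm_symm hi) (Equiv.comm_symm hj)

end Sec

end Congr

section ExpIso

variable {X Y Z X' Y' Z' : Type} [MulAction G X] [MulAction G Y] [MulAction G Z]
  [MulAction G X'] [MulAction G Y'] [MulAction G Z']

/-- An isomorphism between the top rows of the canonical exponential diagrams of `(i, j)` and
`(i', j')`, lying over `u` on the left and over `w` on the right. -/
structure ExpIso (i : X →[G] Y) (j : Y →[G] Z) (i' : X' →[G] Y') (j' : Y' →[G] Z')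
    (u : X → X') (w : Z → Z') where
  ecan : ECan i j ≃ ECan i' j'
  sec : Sec i j ≃ Sec i' j'
  ecan_equivariant : IsEquivariant G ⇑ecan
  sec_equivariant : IsEquivariant G ⇑sec
  pi2_ecan : ∀ e, (ecan e).1.2 = sec e.1.2
  eval_ecan : ∀ e, eval i' j' (ecan e) = u (eval i j e)
  pt_sec : ∀ σ, (sec σ).pt = w σ.pt

variable {i : X →[G] Y} {j : Y →[G] Z} {i' : X' →[G] Y'} {j' : Y' →[G] Z'}

theorem IsDistributor.map {A B : Type} [MulAction G A] [MulAction G B]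
    {f : A →[G] X} {g : A →[G] B} {h : B →[G] Z} (hd : IsDistributor i j f g h)
    {u : X → X'} {w : Z → Z'} (Φ : ExpIso i j i' j' u w) {f' : A →[G] X'} {h' : B →[G] Z'}
    (hf : ∀ x, u (f x) = f' x) (hh : ∀ y, w (h y) = h' y) : IsDistributor i' j' f' g h' := by
  obtain ⟨α, β, hα, hβ, he, hg, hp⟩ := hd
  refine ⟨α.trans Φ.ecan, β.trans Φ.sec,
    fun t x => (congrArg Φ.ecan (hα t x)).trans (Φ.ecan_equivariant t _),
    fun t y => (congrArg Φ.sec (hβ t y)).trans (Φ.sec_equivariant t _),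
    fun x => ?_, fun x => ?_, fun y => ?_⟩
  · rw [Equiv.trans_apply, Φ.eval_ecan, he, hf]
  · rw [Equiv.trans_apply, Equiv.trans_apply, Φ.pi2_ecan, hg]
  · rw [Equiv.trans_apply, Φ.pt_sec, hp, hh]

def ExpIso.congr (eX : X ≃ X') (eY : Y ≃ Y') (eZ : Z ≃ Z') (hX : IsEquivariant G ⇑eX)
    (hY : IsEquivariant G ⇑eY) (hZ : IsEquivariant G ⇑eZ)
    (hi : ∀ x, i' (eX x) = eY (i x)) (hj : ∀ y, j' (eY y) = eZ (j y)) :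
    ExpIso i j i' j' eX eZ where
  ecan := Pb.congr eY (Sec.congr hi hj) eZ hj fun _ => rfl
  sec := Sec.congr hi hj
  ecan_equivariant := Pb.congr_equivariant _ _ _ _ _ hY (Sec.map_smul hi hj hX hY hZ)
  sec_equivariant := Sec.map_smul hi hj hX hY hZ
  pi2_ecan _ := rfl
  eval_ecan e := congrArg eX (Sec.sec_congr e.1.2 (eY.symm_apply_apply e.1.1))
  pt_sec _ := rfl

end ExpIso

section PullbackEval

variable {V X Y Z : Type} [MulAction G V] [MulAction G X] [MulAction G Y] [MulAction G Z]
  {i : V →[G] X} {j : X →[G] Y} {k : Y →[G] Z}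

namespace Sec

def restrict (τ : Sec (gcomp j i) k) : Sec j k where
  pt := τ.pt
  sec y h := i (τ.sec y h)
  isSec := τ.isSec

theorem apply_fst_sec (σ : Sec (Pb.sndHom i (evalHom j k)) (pi2Hom j k)) (e : ECan j k)
    (h : pi2Hom j k e = σ.pt) : i (σ.sec e h).1.1 = eval j k e :=
  (σ.sec e h).2.trans (congrArg (eval j k) (σ.isSec e h))

def toComp (σ : Sec (Pb.sndHom i (evalHom j k)) (pi2Hom j k)) : Sec (gcomp j i) k where
  pt := σ.pt.pt
  sec y h := (σ.sec ⟨(y, σ.pt), h⟩ rfl).1.1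
  isSec y h := (congrArg j (apply_fst_sec σ _ _)).trans (σ.pt.isSec y h)

def ofComp (τ : Sec (gcomp j i) k) : Sec (Pb.sndHom i (evalHom j k)) (pi2Hom j k) where
  pt := restrict τ
  sec e he := ⟨(τ.sec e.1.1 (e.2.trans (congrArg Sec.pt he)), e), by
    obtain ⟨⟨y, σ⟩, hy⟩ := e
    obtain rfl : σ = restrict τ := he
    rfl⟩
  isSec _ _ := rfl

theorem restrict_toComp (σ : Sec (Pb.sndHom i (evalHom j k)) (pi2Hom j k)) :
    restrict (toComp σ) = σ.pt :=
  ext' rfl fun _ _ _ => apply_fst_sec σ _ _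

theorem toComp_ofComp (τ : Sec (gcomp j i) k) : toComp (ofComp τ) = τ :=
  ext' rfl fun _ _ _ => rfl

theorem ofComp_toComp (σ : Sec (Pb.sndHom i (evalHom j k)) (pi2Hom j k)) :
    ofComp (toComp σ) = σ := by
  refine ext' (restrict_toComp σ) fun e _ h => Subtype.ext (Prod.ext ?_ (σ.isSec e h).symm)
  refine congrArg (fun p => p.1.1) (sec_congr σ ?_)
  exact Subtype.ext (Prod.ext rfl h.symm)

theorem toComp_smul (t : G) (σ : Sec (Pb.sndHom i (evalHom j k)) (pi2Hom j k)) :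
    toComp (t • σ) = t • toComp σ :=
  ext' rfl fun _ _ _ => by
    refine congrArg (t • ·) (congrArg (fun p => p.1.1) (sec_congr σ ?_))
    exact Subtype.ext (Prod.ext rfl (inv_smul_smul t σ.pt))

def pullbackEvalEquiv : Sec (Pb.sndHom i (evalHom j k)) (pi2Hom j k) ≃ Sec (gcomp j i) k :=
  ⟨toComp, ofComp, ofComp_toComp, toComp_ofComp⟩

end Sec

def ECan.pullbackEvalEquiv :
    ECan (Pb.sndHom i (evalHom j k)) (pi2Hom j k) ≃ ECan (gcomp j i) k where
  toFun x := ⟨(x.1.1.1.1, Sec.toComp x.1.2), x.1.1.2.trans (congrArg Sec.pt x.2)⟩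
  invFun w := ⟨(⟨(w.1.1, Sec.restrict w.1.2), w.2⟩, Sec.ofComp w.1.2), rfl⟩
  left_inv x := Subtype.ext (Prod.ext
    (Subtype.ext (Prod.ext rfl ((Sec.restrict_toComp _).trans x.2.symm))) (Sec.ofComp_toComp _))
  right_inv _ := Subtype.ext (Prod.ext rfl (Sec.toComp_ofComp _))

variable (i j k) in
def ExpIso.pullbackEval :
    ExpIso (Pb.sndHom i (evalHom j k)) (pi2Hom j k) (gcomp j i) k
      (Pb.fstHom i (evalHom j k)) (pHom j k) where
  ecan := ECan.pullbackEvalEquiv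
  sec := Sec.pullbackEvalEquiv
  ecan_equivariant t x := Subtype.ext (Prod.ext rfl (Sec.toComp_smul t x.1.2))
  sec_equivariant := Sec.toComp_smul
  pi2_ecan _ := rfl
  eval_ecan x := by
    refine congrArg (fun p => p.1.1) (Sec.sec_congr x.1.2 ?_)
    exact Subtype.ext (Prod.ext rfl x.2.symm)
  pt_sec _ := rfl

end PullbackEval

theorem statement1_general
    {V X Y Z A B C D : Type}
    [MulAction G V] [MulAction G X] [MulAction G Y] [MulAction G Z]
    [MulAction G A] [MulAction G B] [MulAction G C] [MulAction G D]
    (i : V →[G] X) (j : X →[G] Y) (k : Y →[G] Z)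
    (a : A →[G] X) (b : A →[G] B) (q : B →[G] Z)
    (hdist1 : IsDistributor j k a b q)
    (g : C →[G] Pb i a) (f : C →[G] D) (p : D →[G] B)
    (hdist2 : IsDistributor (Pb.sndHom i a) b g f p) :
    IsDistributor (gcomp j i) k (gcomp (Pb.fstHom i a) g) f (gcomp q p) := by
  obtain ⟨α, β, hα, hβ, heval, hπ, hpt⟩ := hdist1
  let T : Pb i a ≃ Pb i (evalHom j k) := Pb.congr (Equiv.refl V) α (Equiv.refl X)
    (fun _ => rfl) heval
  have hT : IsEquivariant G ⇑T := Pb.congr_equivariant _ _ _ _ _ (fun _ _ => rfl) hα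
  have hcan : IsDistributor (Pb.sndHom i (evalHom j k)) (pi2Hom j k)
      (gcomp hT.toHom g) f (gcomp hβ.toHom p) :=
    hdist2.map (ExpIso.congr T α β hT hα hβ (fun _ => rfl) fun x => (hπ x).symm)
      (fun _ => rfl) fun _ => rfl
  exact hcan.map (ExpIso.pullbackEval i j k) (fun _ => rfl) fun d => hpt (p d)

/-- the distributive law, Lemma `distrlaw`.
Given `i : V → X`, `j : X → Y`, `k : Y → Z` in `Fin_G`, a distributor `(a, b, q)` for
`(j, k)`, the pullback `P := V ×_X A` of `i` and `a` (with projections `h = fst : P → V`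
and `c = snd : P → A`), and a distributor `(g, f, p)` for `(c, b)`, the triple
`(h ∘ g, f, q ∘ p)` is a distributor for `(j ∘ i, k)`. -/
theorem statement1 [Finite G]
    {V X Y Z A B C D : Type}
    [MulAction G V] [MulAction G X] [MulAction G Y] [MulAction G Z]
    [MulAction G A] [MulAction G B] [MulAction G C] [MulAction G D]
    [Finite V] [Finite X] [Finite Y] [Finite Z] [Finite A] [Finite B] [Finite C] [Finite D]
    (i : V →[G] X) (j : X →[G] Y) (k : Y →[G] Z)
    (a : A →[G] X) (b : A →[G] B) (q : B →[G] Z)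
    (hdist1 : IsDistributor j k a b q)
    (g : C →[G] Pb i a) (f : C →[G] D) (p : D →[G] B)
    (hdist2 : IsDistributor (Pb.sndHom i a) b g f p) :
    IsDistributor (gcomp j i) k (gcomp (Pb.fstHom i a) g) f (gcomp q p) :=
  statement1_general i j k a b q hdist1 g f p hdist2

end Tamb
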